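/- arXiv:1811.02157 — 4 statements merged into one kernel-verified Lean document; each statement's English description precedes it below -/
import Mathlib

section
/- Suppose u = (u₁, u₂, τ), v = (0, v₂, κ) satisfy the homogeneous self-dual embedding Qu = v, u₂ ∈ K*, v₂ ∈ K, τ ≥ 0, κ ≥ 0, τ + κ > 0, and τ > 0. Then x = u₁/τ, y = u₂/τ, s = v₂/τ satisfy the KKT conditions: Ax + s = b, Aᵀy + c = 0, s ∈ K, y ∈ K*, sᵀy = 0. -/
open Matrix

/-- The skew-symmetric matrix of the homogeneous self-dual embedding,
`Q = [[0, Aᵀ, c], [-A, 0, b], [-cᵀ, -bᵀ, 0]]`, indexed by `Fin n ⊕ (Fin m ⊕ Unit)`. -/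
def embedQ {m n : ℕ} (A : Matrix (Fin m) (Fin n) ℝ) (b : Fin m → ℝ) (c : Fin n → ℝ) :
    Matrix (Fin n ⊕ (Fin m ⊕ Unit)) (Fin n ⊕ (Fin m ⊕ Unit)) ℝ
  | Sum.inl _, Sum.inl _ => 0
  | Sum.inl i, Sum.inr (Sum.inl j) => A j i
  | Sum.inl i, Sum.inr (Sum.inr _) => c i
  | Sum.inr (Sum.inl i), Sum.inl j => -A i j
  | Sum.inr (Sum.inl _), Sum.inr (Sum.inl _) => 0
  | Sum.inr (Sum.inl i), Sum.inr (Sum.inr _) => b i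
  | Sum.inr (Sum.inr _), Sum.inl j => -c j
  | Sum.inr (Sum.inr _), Sum.inr (Sum.inl j) => -b j
  | Sum.inr (Sum.inr _), Sum.inr (Sum.inr _) => 0

/-! Because `Q` is skew-symmetric, `uᵀ Q u = 0`, so `uᵀ v = u₂ᵀ v₂ + τ κ = 0`; both summands are
nonnegative, hence `u₂ᵀ v₂ = 0`. The first two block rows of `Qu = v` are the dual and primal
equations multiplied by `τ`, so dividing by `τ > 0` gives the KKT system. -/

theorem Matrix.dotProduct_mulVec_self_of_transpose_eq_neg {ι R : Type*} [Fintype ι] [CommRing R]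
    [NoZeroDivisors R] [CharZero R] {M : Matrix ι ι R} (hM : Mᵀ = -M) (x : ι → R) :
    x ⬝ᵥ (M *ᵥ x) = 0 := by
  have h : x ⬝ᵥ (M *ᵥ x) = -(x ⬝ᵥ (M *ᵥ x)) :=
    calc x ⬝ᵥ (M *ᵥ x) = (Mᵀ *ᵥ x) ⬝ᵥ x := by rw [dotProduct_mulVec, mulVec_transpose]
      _ = -(x ⬝ᵥ (M *ᵥ x)) := by rw [hM, neg_mulVec, neg_dotProduct, dotProduct_comm]
  exact self_eq_neg.mp h

section

variable {m n : ℕ} (A : Matrix (Fin m) (Fin n) ℝ) (b : Fin m → ℝ) (c : Fin n → ℝ)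

theorem embedQ_transpose : (embedQ A b c)ᵀ = -embedQ A b c := by
  ext (i | i | i) (j | j | j) <;> simp [embedQ]

theorem embedQ_mulVec (x : Fin n → ℝ) (y : Fin m → ℝ) (t : ℝ) :
    embedQ A b c *ᵥ Sum.elim x (Sum.elim y fun _ => t) =
      Sum.elim (Aᵀ *ᵥ y + t • c) (Sum.elim (t • b - A *ᵥ x) fun _ => -(c ⬝ᵥ x) - b ⬝ᵥ y) := by
  ext (i | i | i) <;>
    simp [embedQ, mulVec, dotProduct, Fintype.sum_sum_type, mul_comm, sub_eq_neg_add]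
  ring

theorem dotProduct_add_mul_eq_zero_of_embedQ_mulVec_eq {u₁ : Fin n → ℝ} {u₂ v₂ : Fin m → ℝ}
    {τ κ : ℝ} (h : embedQ A b c *ᵥ Sum.elim u₁ (Sum.elim u₂ fun _ => τ)
      = Sum.elim (0 : Fin n → ℝ) (Sum.elim v₂ fun _ => κ)) :
    u₂ ⬝ᵥ v₂ + τ * κ = 0 := by
  have := dotProduct_mulVec_self_of_transpose_eq_neg (embedQ_transpose A b c)
    (Sum.elim u₁ (Sum.elim u₂ fun _ => τ))
  simpa [h, sumElim_dotProduct_sumElim] using this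

end

theorem embed_solution_of_tau_pos_general
    {m n : ℕ} (A : Matrix (Fin m) (Fin n) ℝ) (b : Fin m → ℝ) (c : Fin n → ℝ)
    (K : Set (Fin m → ℝ))
    (hKcone : ∀ (t : ℝ), 0 ≤ t → ∀ k ∈ K, t • k ∈ K)
    (u₁ : Fin n → ℝ) (u₂ v₂ : Fin m → ℝ) (τ κ : ℝ)
    (hu₂ : ∀ k ∈ K, 0 ≤ u₂ ⬝ᵥ k) (hv₂ : v₂ ∈ K) (hκ : 0 ≤ κ)
    (hτpos : 0 < τ)
    (hQuv : embedQ A b c *ᵥ Sum.elim u₁ (Sum.elim u₂ (fun _ => τ))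
      = Sum.elim (0 : Fin n → ℝ) (Sum.elim v₂ (fun _ => κ))) :
    A *ᵥ (τ⁻¹ • u₁) + τ⁻¹ • v₂ = b ∧
    Aᵀ *ᵥ (τ⁻¹ • u₂) + c = 0 ∧
    τ⁻¹ • v₂ ∈ K ∧
    (∀ k ∈ K, 0 ≤ (τ⁻¹ • u₂) ⬝ᵥ k) ∧
    (τ⁻¹ • v₂) ⬝ᵥ (τ⁻¹ • u₂) = 0 := by
  have hgap := dotProduct_add_mul_eq_zero_of_embedQ_mulVec_eq A b c hQuv
  have hcompl : v₂ ⬝ᵥ u₂ = 0 := by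
    rw [dotProduct_comm]
    linarith [hu₂ v₂ hv₂, mul_nonneg hτpos.le hκ]
  rw [embedQ_mulVec, Sum.elim_eq_iff, Sum.elim_eq_iff] at hQuv
  obtain ⟨hdual, hprimal, -⟩ := hQuv
  have hτinv : 0 ≤ τ⁻¹ := inv_nonneg.2 hτpos.le
  refine ⟨?_, ?_, hKcone τ⁻¹ hτinv v₂ hv₂, fun k hk => ?_, ?_⟩
  · rw [mulVec_smul, ← smul_add, ← hprimal, add_sub_cancel, inv_smul_smul₀ hτpos.ne']
  · rw [mulVec_smul, ← inv_smul_smul₀ hτpos.ne' c, ← smul_add, hdual, smul_zero]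
  · rw [smul_dotProduct]
    exact smul_nonneg hτinv (hu₂ k hk)
  · rw [smul_dotProduct, dotProduct_smul, hcompl, smul_zero, smul_zero]

/-- If `Qu = v` holds with `τ > 0`, then `(u₁/τ, u₂/τ, v₂/τ)` satisfies the KKT conditions. -/
theorem embed_solution_of_tau_pos
    {m n : ℕ} (A : Matrix (Fin m) (Fin n) ℝ) (b : Fin m → ℝ) (c : Fin n → ℝ)
    (K : Set (Fin m → ℝ)) (hKne : K.Nonempty) (hKcl : IsClosed K) (hKconv : Convex ℝ K)
    (hKcone : ∀ (t : ℝ), 0 ≤ t → ∀ k ∈ K, t • k ∈ K)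
    (u₁ : Fin n → ℝ) (u₂ v₂ : Fin m → ℝ) (τ κ : ℝ)
    (hu₂ : ∀ k ∈ K, 0 ≤ u₂ ⬝ᵥ k) (hv₂ : v₂ ∈ K) (hτ : 0 ≤ τ) (hκ : 0 ≤ κ)
    (hτκ : 0 < τ + κ) (hτpos : 0 < τ)
    (hQuv : embedQ A b c *ᵥ Sum.elim u₁ (Sum.elim u₂ (fun _ => τ))
      = Sum.elim (0 : Fin n → ℝ) (Sum.elim v₂ (fun _ => κ))) :
    A *ᵥ (τ⁻¹ • u₁) + τ⁻¹ • v₂ = b ∧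
    Aᵀ *ᵥ (τ⁻¹ • u₂) + c = 0 ∧
    τ⁻¹ • v₂ ∈ K ∧
    (∀ k ∈ K, 0 ≤ (τ⁻¹ • u₂) ⬝ᵥ k) ∧
    (τ⁻¹ • v₂) ⬝ᵥ (τ⁻¹ • u₂) = 0 :=
  embed_solution_of_tau_pos_general A b c K hKcone u₁ u₂ v₂ τ κ hu₂ hv₂ hκ hτpos hQuv
end

section
/- Suppose u = (u₁, u₂, τ), v = (0, v₂, κ) satisfy Qu = v, u₂ ∈ K*, v₂ ∈ K, τ = 0, κ > 0, and bᵀu₂ < 0. Then y = u₂/(−bᵀu₂) (equivalently y = u₂/(bᵀu₂) with appropriate sign) satisfies Aᵀy = 0, y ∈ K*, bᵀy = -1, i.e., is a certificate of primal infeasibility. -/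
open Matrix

theorem embedQ_mulVec_inl {m n : ℕ} (A : Matrix (Fin m) (Fin n) ℝ) (b : Fin m → ℝ)
    (c : Fin n → ℝ) (x : Fin n → ℝ) (y : Fin m → ℝ) (τ : ℝ) (i : Fin n) :
    (embedQ A b c *ᵥ Sum.elim x (Sum.elim y fun _ => τ)) (Sum.inl i) =
      (Aᵀ *ᵥ y) i + τ * c i := by
  simp [mulVec, dotProduct, Fintype.sum_sum_type, embedQ, transpose_apply, mul_comm]

theorem transpose_mulVec_eq_zero_of_embedQ_mulVec_eq {m n : ℕ} {A : Matrix (Fin m) (Fin n) ℝ}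
    {b : Fin m → ℝ} {c : Fin n → ℝ} {x : Fin n → ℝ} {y : Fin m → ℝ} {w : Fin m ⊕ Unit → ℝ}
    (h : embedQ A b c *ᵥ Sum.elim x (Sum.elim y fun _ => (0 : ℝ)) =
      Sum.elim (0 : Fin n → ℝ) w) :
    Aᵀ *ᵥ y = 0 := by
  funext i
  simpa [embedQ_mulVec_inl] using congrFun h (Sum.inl i)

section Certificate

variable {R ι η : Type*} [Field R] [LinearOrder R] [IsStrictOrderedRing R] [Fintype ι]

/-- Such a `y` rules out every `x` with `b - Ax ∈ K`, which would give `0 ≤ yᵀ(b - Ax) = -1`. -/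
def IsPrimalInfeasibilityCertificate (A : Matrix ι η R) (b : ι → R) (K : Set (ι → R))
    (y : ι → R) : Prop :=
  Aᵀ *ᵥ y = 0 ∧ (∀ k ∈ K, 0 ≤ y ⬝ᵥ k) ∧ b ⬝ᵥ y = -1

theorem isPrimalInfeasibilityCertificate_inv_smul {A : Matrix ι η R} {b : ι → R}
    {K : Set (ι → R)} {y : ι → R} (hA : Aᵀ *ᵥ y = 0) (hK : ∀ k ∈ K, 0 ≤ y ⬝ᵥ k)
    (hb : b ⬝ᵥ y < 0) :
    IsPrimalInfeasibilityCertificate A b K ((-(b ⬝ᵥ y))⁻¹ • y) := by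
  have hpos : 0 < (-(b ⬝ᵥ y))⁻¹ := inv_pos.mpr (neg_pos.mpr hb)
  refine ⟨by rw [mulVec_smul, hA, smul_zero], fun k hk => ?_, ?_⟩
  · rw [smul_dotProduct, smul_eq_mul]
    exact mul_nonneg hpos.le (hK k hk)
  · rw [dotProduct_smul, smul_eq_mul, inv_mul_eq_div, div_neg, div_self hb.ne]

end Certificate

theorem embed_primal_infeasibility_certificate_general
    {m n : ℕ} (A : Matrix (Fin m) (Fin n) ℝ) (b : Fin m → ℝ) (c : Fin n → ℝ)
    (K : Set (Fin m → ℝ))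
    (u₁ : Fin n → ℝ) (u₂ v₂ : Fin m → ℝ) (κ : ℝ)
    (hu₂ : ∀ k ∈ K, 0 ≤ u₂ ⬝ᵥ k)
    (hb : b ⬝ᵥ u₂ < 0)
    (hQuv : embedQ A b c *ᵥ Sum.elim u₁ (Sum.elim u₂ (fun _ => (0 : ℝ)))
      = Sum.elim (0 : Fin n → ℝ) (Sum.elim v₂ (fun _ => κ))) :
    Aᵀ *ᵥ ((-(b ⬝ᵥ u₂))⁻¹ • u₂) = 0 ∧
    (∀ k ∈ K, 0 ≤ ((-(b ⬝ᵥ u₂))⁻¹ • u₂) ⬝ᵥ k) ∧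
    b ⬝ᵥ ((-(b ⬝ᵥ u₂))⁻¹ • u₂) = -1 :=
  isPrimalInfeasibilityCertificate_inv_smul (transpose_mulVec_eq_zero_of_embedQ_mulVec_eq hQuv)
    hu₂ hb

/-- If `Qu = v` holds with `τ = 0`, `κ > 0` and `bᵀu₂ < 0`, then
`y = u₂ / (-bᵀu₂)` is a certificate of primal infeasibility:
`Aᵀy = 0`, `y ∈ K*`, `bᵀy = -1`. -/
theorem embed_primal_infeasibility_certificate
    {m n : ℕ} (A : Matrix (Fin m) (Fin n) ℝ) (b : Fin m → ℝ) (c : Fin n → ℝ)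
    (K : Set (Fin m → ℝ)) (hKne : K.Nonempty) (hKcl : IsClosed K) (hKconv : Convex ℝ K)
    (hKcone : ∀ (t : ℝ), 0 ≤ t → ∀ k ∈ K, t • k ∈ K)
    (u₁ : Fin n → ℝ) (u₂ v₂ : Fin m → ℝ) (κ : ℝ)
    (hu₂ : ∀ k ∈ K, 0 ≤ u₂ ⬝ᵥ k) (hv₂ : v₂ ∈ K) (hκ : 0 < κ)
    (hb : b ⬝ᵥ u₂ < 0)
    (hQuv : embedQ A b c *ᵥ Sum.elim u₁ (Sum.elim u₂ (fun _ => (0 : ℝ)))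
      = Sum.elim (0 : Fin n → ℝ) (Sum.elim v₂ (fun _ => κ))) :
    Aᵀ *ᵥ ((-(b ⬝ᵥ u₂))⁻¹ • u₂) = 0 ∧
    (∀ k ∈ K, 0 ≤ ((-(b ⬝ᵥ u₂))⁻¹ • u₂) ⬝ᵥ k) ∧
    b ⬝ᵥ ((-(b ⬝ᵥ u₂))⁻¹ • u₂) = -1 :=
  embed_primal_infeasibility_certificate_general A b c K u₁ u₂ v₂ κ hu₂ hb hQuv
end

section
/- If (x, y, s) satisfies the KKT conditions for the conic primal-dual pair, then u = (x, y, 1) and v = (0, s, 0) satisfy the homogeneous self-dual embedding: Qu = v, u ∈ ℝⁿ × K* × ℝ₊, v ∈ {0}ⁿ × K × ℝ₊, and u_{n+m+1} + v_{n+m+1} > 0. -/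
open Matrix

/-- If `(x, y, s)` satisfies the KKT conditions, then `u = (x, y, 1)` and `v = (0, s, 0)`
satisfy the homogeneous self-dual embedding. -/
theorem kkt_to_embedding
    {m n : ℕ} (A : Matrix (Fin m) (Fin n) ℝ) (b : Fin m → ℝ) (c : Fin n → ℝ)
    (K : Set (Fin m → ℝ)) (hKne : K.Nonempty) (hKcl : IsClosed K) (hKconv : Convex ℝ K)
    (hKcone : ∀ (t : ℝ), 0 ≤ t → ∀ k ∈ K, t • k ∈ K)
    (x : Fin n → ℝ) (y s : Fin m → ℝ)
    (h1 : A *ᵥ x + s = b) (h2 : Aᵀ *ᵥ y + c = 0) (h3 : s ∈ K)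
    (h4 : ∀ k ∈ K, 0 ≤ y ⬝ᵥ k) (h5 : s ⬝ᵥ y = 0) :
    embedQ A b c *ᵥ Sum.elim x (Sum.elim y (fun _ => (1 : ℝ)))
      = Sum.elim (0 : Fin n → ℝ) (Sum.elim s (fun _ => (0 : ℝ))) ∧
    (∀ k ∈ K, 0 ≤ y ⬝ᵥ k) ∧ (0 : ℝ) ≤ 1 ∧
    s ∈ K ∧ (0 : ℝ) ≤ 0 ∧
    (0 : ℝ) < 1 + 0 := by
  refine ⟨?_, h4, zero_le_one, h3, le_refl _, by norm_num⟩
  have hby : b ⬝ᵥ y = -(c ⬝ᵥ x) := by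
    have := congrFun h2
    have hAx : (A *ᵥ x) ⬝ᵥ y = (Aᵀ *ᵥ y) ⬝ᵥ x := by
      simp only [dotProduct, mulVec, transpose_apply, Finset.sum_mul, Finset.mul_sum]
      rw [Finset.sum_comm]
      exact Finset.sum_congr rfl fun i _ => Finset.sum_congr rfl fun j _ => by ring
    calc b ⬝ᵥ y = (A *ᵥ x + s) ⬝ᵥ y := by rw [h1]
      _ = (Aᵀ *ᵥ y) ⬝ᵥ x + s ⬝ᵥ y := by rw [add_dotProduct, hAx]
      _ = (-c) ⬝ᵥ x + 0 := by
          rw [h5]; congr 1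
          have : Aᵀ *ᵥ y = -c := by
            have := h2; funext i
            have := congrFun h2 i
            simp only [Pi.add_apply, Pi.zero_apply] at this
            simp [Pi.neg_apply]; linarith
          rw [this]
      _ = -(c ⬝ᵥ x) := by simp
  funext i
  rcases i with i | i | i
  · have := congrFun h2 i
    simp only [Pi.add_apply, Pi.zero_apply, mulVec, dotProduct, transpose_apply] at this ⊢
    simp only [embedQ, Sum.elim_inl, Sum.elim_inr, Fintype.sum_sum_type]
    simp [Finset.sum_add_distrib]
    linarith
  · have := congrFun h1 i
    simp only [Pi.add_apply] at this
    simp only [mulVec, dotProduct] at this ⊢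
    simp only [embedQ, Sum.elim_inl, Sum.elim_inr, Fintype.sum_sum_type]
    simp only [Finset.sum_neg_distrib, neg_mul, mul_one]
    simp [Finset.sum_neg_distrib]
    linarith
  · simp only [mulVec, dotProduct] at hby ⊢
    simp only [embedQ, Sum.elim_inl, Sum.elim_inr, Fintype.sum_sum_type]
    simp only [neg_mul, mul_one, Finset.sum_neg_distrib, zero_mul, Sum.elim_inr,
      Finset.sum_const_zero, Finset.univ_unique, Finset.sum_singleton]
    have h6 : ∑ j, b j * y j = ∑ j, y j * b j := Finset.sum_congr rfl fun j _ => mul_comm _ _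
    linarith [hby]
end

section
/- For the exponential cone K ⊆ ℝ³, if (x, y, z) satisfies x < 0 and y < 0, then the Euclidean projection of (x, y, z) onto K is (x, 0, max(z, 0)). -/
/-- The exponential cone
`K = {(x, y, z) : y > 0, y·exp(x/y) ≤ z} ∪ (ℝ₋ × {0} × ℝ₊)` in `ℝ³`. -/
def expCone : Set (ℝ × ℝ × ℝ) :=
  {p | 0 < p.2.1 ∧ p.2.1 * Real.exp (p.1 / p.2.1) ≤ p.2.2} ∪
  {p | p.1 ≤ 0 ∧ p.2.1 = 0 ∧ 0 ≤ p.2.2}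

/-- If `x < 0` and `y < 0`, the Euclidean projection of `(x, y, z)` onto the
exponential cone is `(x, 0, max z 0)`: it belongs to the cone and minimizes the
squared Euclidean distance over the cone. -/
theorem expCone_projection_case3
    (x y z : ℝ) (hx : x < 0) (hy : y < 0) :
    (x, (0 : ℝ), max z 0) ∈ expCone ∧
    ∀ w ∈ expCone,
      (x - x) ^ 2 + (y - 0) ^ 2 + (z - max z 0) ^ 2 ≤
      (x - w.1) ^ 2 + (y - w.2.1) ^ 2 + (z - w.2.2) ^ 2 := by
  constructor
  · exact Or.inr ⟨hx.le, rfl, le_max_right _ _⟩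
  · intro w hw
    have hkey : 0 ≤ w.2.1 ∧ 0 ≤ w.2.2 := by
      rcases hw with ⟨h1, h2⟩ | ⟨h1, h2, h3⟩
      · refine ⟨h1.le, le_trans ?_ h2⟩
        positivity
      · exact ⟨h2.ge, h3⟩
    obtain ⟨hy2, hz2⟩ := hkey
    have h1 : (y - 0) ^ 2 ≤ (y - w.2.1) ^ 2 := by nlinarith
    have h2 : (z - max z 0) ^ 2 ≤ (z - w.2.2) ^ 2 := by
      rcases le_or_gt 0 z with h | h
      · rw [max_eq_left h]; simpa using sq_nonneg (z - w.2.2)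
      · rw [max_eq_right h.le]; nlinarith
    nlinarith [sq_nonneg (x - w.1)]
end
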